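/- Consider a run of the greedy heuristic and a finset OPT ⊆ V with c(OPT) ≤ b. Suppose t < n is the first index at which an element of OPT is considered but rejected, i.e., u t ∈ OPT, c(A t) + c(u t) > b, and for every s < t with u s ∈ OPT one has c(A s) + c(u s) ≤ b. Put o := u t, Q := A t, and OPT' := OPT \ (Q ∪ {o}). Then (b − c(Q)) · (f(S_g) − f(Q)) ≥ (b − 2·c(Q)) · (f(Q ∪ OPT') − f(Q)); equivalently, when c(Q) < b, f(S_g) ≥ f(Q) + (1 − c(Q)/(b − c(Q))) · (f(Q ∪ OPT') − f(Q)). -/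

import Mathlib

/-!
Let `Q = A t` and `OPT' = OPT \ (Q ∪ {o})`. Every `r ∈ OPT'` that the heuristic rejects is
considered after step `t`; by the greedy rule and submodularity, every element accepted before
the turn of `r` buys value at density at least `f(r ∣ A_r) / c(r)`, and the budget spent between
step `t` and the turn of `r` exceeds `b − c(Q) − c(r)` because `r` did not fit. Hence
`f(r ∣ S_g) · (b − c(Q) − c(r)) ≤ c(r) · (f(S_g) − f(Q))`. Since `o` did not fit next to `Q` but
fits next to the rejected part `R` of `OPT'`, `c(R) < c(Q)`; summing the bounds over `R` and using
`f(Q ∪ OPT') ≤ f(S_g) + ∑_{r ∈ R} f(r ∣ S_g)` gives the claim.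
-/

open Finset Function

theorem mul_sum_le_of_mul_sub_le {ι : Type*} {R : Finset ι} {g c : ι → ℝ} {b q G : ℝ}
    (hg : ∀ r ∈ R, 0 ≤ g r) (hc : ∀ r ∈ R, 0 ≤ c r) (hG : 0 ≤ G) (hcR : ∑ r ∈ R, c r ≤ q)
    (h : ∀ r ∈ R, g r * (b - q - c r) ≤ c r * G) :
    (b - 2 * q) * ∑ r ∈ R, g r ≤ q * G := calc
  (b - 2 * q) * ∑ r ∈ R, g r = ∑ r ∈ R, g r * (b - 2 * q) := by
    rw [mul_sum]
    simp_rw [mul_comm]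
  _ ≤ ∑ r ∈ R, c r * G := sum_le_sum fun r hr => by
    have hcr : c r ≤ q := (single_le_sum hc hr).trans hcR
    exact (mul_le_mul_of_nonneg_left (by linarith) (hg r hr)).trans (h r hr)
  _ = (∑ r ∈ R, c r) * G := (sum_mul _ _ _).symm
  _ ≤ q * G := mul_le_mul_of_nonneg_right hcR hG

theorem Fin.monotoneOn_Iic_of_le_succ {α : Type*} [Preorder α] {n : ℕ} {φ : Fin (n + 1) → α}
    {b : Fin (n + 1)} (h : ∀ i : Fin n, i.succ ≤ b → φ i.castSucc ≤ φ i.succ) :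
    MonotoneOn φ (Set.Iic b) := by
  refine monotoneOn_of_le_succ Set.ordConnected_Iic fun a ha _ hsucc => ?_
  obtain ⟨i, rfl⟩ : ∃ i : Fin n, i.castSucc = a :=
    Fin.exists_castSucc_eq.2 (by rintro rfl; exact ha fun x _ => Fin.le_last x)
  rw [Fin.orderSucc_castSucc] at hsucc ⊢
  exact h i hsucc

section

variable {V : Type*} [DecidableEq V]

def IsSubmodular (f : Finset V → ℝ) : Prop :=
  ∀ S T : Finset V, f (S ∪ T) + f (S ∩ T) ≤ f S + f T

def marginal (f : Finset V → ℝ) (v : V) (S : Finset V) : ℝ :=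
  f (insert v S) - f S

section Submodular

variable {f : Finset V → ℝ}

theorem marginal_nonneg (hmono : Monotone f) (v : V) (S : Finset V) : 0 ≤ marginal f v S :=
  sub_nonneg.2 (hmono (subset_insert v S))

theorem IsSubmodular.marginal_anti (hsub : IsSubmodular f) (hmono : Monotone f) (v : V)
    {S T : Finset V} (hST : S ⊆ T) : marginal f v T ≤ marginal f v S := by
  have hunion : insert v S ∪ T = insert v T := by
    rw [insert_union, union_eq_right.2 hST]
  have hinter : f S ≤ f (insert v S ∩ T) := hmono (subset_inter (subset_insert v S) hST)
  have := hsub (insert v S) T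
  rw [hunion] at this
  unfold marginal
  linarith

theorem IsSubmodular.le_add_sum_marginal (hsub : IsSubmodular f) (hmono : Monotone f)
    (S T : Finset V) : f (S ∪ T) ≤ f S + ∑ v ∈ T, marginal f v S := by
  induction T using Finset.induction_on with
  | empty => simp
  | insert a T haT ih =>
    have hstep := hsub.marginal_anti hmono a (subset_union_left : S ⊆ S ∪ T)
    have hinsert : f (insert a (S ∪ T)) = f (S ∪ T) + marginal f a (S ∪ T) := by
      unfold marginal; ring
    rw [union_insert, sum_insert haT]
    linarith

end Submodular

structure IsBudgetedRun {n : ℕ} (c : V → ℝ) (b : ℝ) (u : Fin n → V)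
    (A : Fin (n + 1) → Finset V) : Prop where
  zero : A 0 = ∅
  succ (i : Fin n) : A i.succ =
    if ∑ v ∈ A i.castSucc, c v + c (u i) ≤ b then insert (u i) (A i.castSucc) else A i.castSucc

namespace IsBudgetedRun

variable {n : ℕ} {c : V → ℝ} {b : ℝ} {u : Fin n → V} {A : Fin (n + 1) → Finset V}

theorem monotone (hA : IsBudgetedRun c b u A) : Monotone A :=
  Fin.monotone_iff_le_succ.2 fun i => by
    rw [hA.succ i]
    split_ifs
    exacts [subset_insert _ _, le_rfl]

theorem sum_le (hA : IsBudgetedRun c b u A) (hb : 0 ≤ b) (j : Fin (n + 1)) :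
    ∑ v ∈ A j, c v ≤ b := by
  induction j using Fin.induction with
  | zero => simpa [hA.zero] using hb
  | succ i ih =>
    rw [hA.succ i]
    split_ifs with hfit
    · by_cases hmem : u i ∈ A i.castSucc
      · rwa [insert_eq_of_mem hmem]
      · rwa [sum_insert hmem, add_comm]
    · exact ih

theorem mem_iff (hA : IsBudgetedRun c b u A) (hu : Injective u) (s : Fin n) (j : Fin (n + 1)) :
    u s ∈ A j ↔ s.castSucc < j ∧ ∑ v ∈ A s.castSucc, c v + c (u s) ≤ b := by
  induction j using Fin.induction with
  | zero => simp [hA.zero]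
  | succ i ih =>
    have hlt : s.castSucc < i.succ ↔ s.castSucc < i.castSucc ∨ s = i := by
      rw [Fin.castSucc_lt_succ_iff, le_iff_lt_or_eq, Fin.castSucc_lt_castSucc_iff]
    rw [hA.succ i, hlt]
    split_ifs with hfit
    · rw [mem_insert, hu.eq_iff, ih]
      constructor
      · rintro (rfl | ⟨hlt, hs⟩)
        exacts [⟨Or.inr rfl, hfit⟩, ⟨Or.inl hlt, hs⟩]
      · rintro ⟨hlt | rfl, hs⟩
        exacts [Or.inr ⟨hlt, hs⟩, Or.inl rfl]
    · rw [ih]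
      constructor
      · rintro ⟨hlt, hs⟩
        exact ⟨Or.inl hlt, hs⟩
      · rintro ⟨hlt | rfl, hs⟩
        exacts [⟨hlt, hs⟩, absurd hs hfit]

theorem notMem_castSucc (hA : IsBudgetedRun c b u A) (hu : Injective u) (i : Fin n) :
    u i ∉ A i.castSucc := by
  simp [hA.mem_iff hu]

theorem mem_last_iff (hA : IsBudgetedRun c b u A) (hu : Injective u) (s : Fin n) :
    u s ∈ A (Fin.last n) ↔ ∑ v ∈ A s.castSucc, c v + c (u s) ≤ b := by
  simp [hA.mem_iff hu, Fin.castSucc_lt_last]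

variable {f : Finset V → ℝ}

theorem marginal_mul_sum_sub_le (hA : IsBudgetedRun c b u A) (hu : Injective u)
    (hc : ∀ v, 0 ≤ c v) (hmono : Monotone f) (hsub : IsSubmodular f)
    (hgreedy : ∀ i j : Fin n, i ≤ j →
      marginal f (u j) (A i.castSucc) * c (u i) ≤ marginal f (u i) (A i.castSucc) * c (u j))
    (k : Fin n) {j : Fin (n + 1)} (hjk : j ≤ k.castSucc) :
    marginal f (u k) (A k.castSucc) * (∑ v ∈ A k.castSucc, c v - ∑ v ∈ A j, c v) ≤
      c (u k) * (f (A k.castSucc) - f (A j)) := by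
  set m := marginal f (u k) (A k.castSucc)
  let φ : Fin (n + 1) → ℝ := fun i => c (u k) * f (A i) - m * ∑ v ∈ A i, c v
  suffices φ j ≤ φ k.castSucc by simp only [φ] at this; linarith
  refine Fin.monotoneOn_Iic_of_le_succ (fun i hik => ?_) hjk (Set.mem_Iic.2 le_rfl) hjk
  rw [Fin.succ_le_castSucc_iff] at hik
  simp only [φ, hA.succ i]
  split_ifs
  · have hgain : m * c (u i) ≤ c (u k) * marginal f (u i) (A i.castSucc) := calc
      m * c (u i) ≤ marginal f (u k) (A i.castSucc) * c (u i) :=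
        mul_le_mul_of_nonneg_right
          (hsub.marginal_anti hmono _ (hA.monotone (Fin.castSucc_le_castSucc_iff.2 hik.le)))
          (hc _)
      _ ≤ marginal f (u i) (A i.castSucc) * c (u k) := hgreedy i k hik.le
      _ = c (u k) * marginal f (u i) (A i.castSucc) := mul_comm _ _
    rw [sum_insert (hA.notMem_castSucc hu i)]
    unfold marginal at hgain
    linarith
  · exact le_rfl

theorem marginal_last_mul_le_of_rejected (hA : IsBudgetedRun c b u A) (hu : Injective u)
    (hc : ∀ v, 0 ≤ c v) (hmono : Monotone f) (hsub : IsSubmodular f)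
    (hgreedy : ∀ i j : Fin n, i ≤ j →
      marginal f (u j) (A i.castSucc) * c (u i) ≤ marginal f (u i) (A i.castSucc) * c (u j))
    {k : Fin n} (hrej : b < ∑ v ∈ A k.castSucc, c v + c (u k)) {j : Fin (n + 1)}
    (hjk : j ≤ k.castSucc) :
    marginal f (u k) (A (Fin.last n)) * (b - ∑ v ∈ A j, c v - c (u k)) ≤
      c (u k) * (f (A (Fin.last n)) - f (A j)) := by
  set m := marginal f (u k) (A k.castSucc)
  set m' := marginal f (u k) (A (Fin.last n))
  have hm' : 0 ≤ m' := marginal_nonneg hmono _ _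
  have hm'm : m' ≤ m := hsub.marginal_anti hmono _ (hA.monotone (Fin.le_last _))
  have hrate := hA.marginal_mul_sum_sub_le hu hc hmono hsub hgreedy k hjk
  have hfinal : f (A k.castSucc) ≤ f (A (Fin.last n)) := hmono (hA.monotone (Fin.le_last _))
  rcases le_or_gt (b - ∑ v ∈ A j, c v - c (u k)) 0 with hneg | hpos
  · have : f (A j) ≤ f (A (Fin.last n)) := hmono (hA.monotone (Fin.le_last _))
    nlinarith [hc (u k)]
  · calc m' * (b - ∑ v ∈ A j, c v - c (u k))
        ≤ m * (∑ v ∈ A k.castSucc, c v - ∑ v ∈ A j, c v) :=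
          mul_le_mul hm'm (by linarith) hpos.le (hm'.trans hm'm)
      _ ≤ c (u k) * (f (A k.castSucc) - f (A j)) := hrate
      _ ≤ c (u k) * (f (A (Fin.last n)) - f (A j)) :=
          mul_le_mul_of_nonneg_left (by linarith) (hc _)

theorem marginal_last_mul_le_of_notMem (hA : IsBudgetedRun c b u A) (hu : Bijective u)
    (hc : ∀ v, 0 ≤ c v) (hmono : Monotone f) (hsub : IsSubmodular f)
    (hgreedy : ∀ i j : Fin n, i ≤ j →
      marginal f (u j) (A i.castSucc) * c (u i) ≤ marginal f (u i) (A i.castSucc) * c (u j))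
    {OPT : Finset V} {t : Fin n}
    (htfirst : ∀ s < t, u s ∈ OPT → ∑ v ∈ A s.castSucc, c v + c (u s) ≤ b)
    {r : V} (hrO : r ∈ OPT) (hrt : r ∉ A t.castSucc) (hrS : r ∉ A (Fin.last n)) :
    marginal f r (A (Fin.last n)) * (b - ∑ v ∈ A t.castSucc, c v - c r) ≤
      c r * (f (A (Fin.last n)) - f (A t.castSucc)) := by
  obtain ⟨k, rfl⟩ := hu.2 r
  have htk : t ≤ k := not_lt.1 fun hkt => hrt <|
    (hA.mem_iff hu.1 k _).2 ⟨Fin.castSucc_lt_castSucc_iff.2 hkt, htfirst k hkt hrO⟩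
  have hrej : b < ∑ v ∈ A k.castSucc, c v + c (u k) :=
    not_le.1 fun hfit => hrS ((hA.mem_last_iff hu.1 k).2 hfit)
  exact hA.marginal_last_mul_le_of_rejected hu.1 hc hmono hsub hgreedy hrej
    (Fin.castSucc_le_castSucc_iff.2 htk)

theorem first_rejected_bound (hA : IsBudgetedRun c b u A) (hu : Bijective u) (hc : ∀ v, 0 ≤ c v)
    (hb : 0 ≤ b) (hmono : Monotone f) (hsub : IsSubmodular f)
    (hgreedy : ∀ i j : Fin n, i ≤ j →
      marginal f (u j) (A i.castSucc) * c (u i) ≤ marginal f (u i) (A i.castSucc) * c (u j))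
    {OPT : Finset V} (hOPT : ∑ v ∈ OPT, c v ≤ b) {t : Fin n} (htO : u t ∈ OPT)
    (htrej : b < ∑ v ∈ A t.castSucc, c v + c (u t))
    (htfirst : ∀ s < t, u s ∈ OPT → ∑ v ∈ A s.castSucc, c v + c (u s) ≤ b) :
    (b - 2 * ∑ v ∈ A t.castSucc, c v) *
        (f (A t.castSucc ∪ (OPT \ (A t.castSucc ∪ {u t}))) - f (A t.castSucc)) ≤
      (b - ∑ v ∈ A t.castSucc, c v) * (f (A (Fin.last n)) - f (A t.castSucc)) := by
  set Q := A t.castSucc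
  set S := A (Fin.last n)
  set O' := OPT \ (Q ∪ {u t})
  set R := O' \ S
  set q := ∑ v ∈ Q, c v
  have hmemR : ∀ r, r ∈ R ↔ (r ∈ OPT ∧ r ∉ Q ∧ r ≠ u t) ∧ r ∉ S := by
    intro r
    simp only [R, O', mem_sdiff, mem_union, mem_singleton, not_or, ne_eq]
  have hQS : Q ⊆ S := hA.monotone (Fin.le_last _)
  have hG : 0 ≤ f S - f Q := sub_nonneg.2 (hmono hQS)
  have hcover : f (Q ∪ O') ≤ f S + ∑ r ∈ R, marginal f r S := calc
    f (Q ∪ O') ≤ f (S ∪ R) := by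
      rw [union_sdiff_self_eq_union]
      exact hmono (union_subset_union_left hQS)
    _ ≤ f S + ∑ r ∈ R, marginal f r S := hsub.le_add_sum_marginal hmono S R
  have hcR : ∑ r ∈ R, c r ≤ q := by
    have hRsub : R ⊆ OPT.erase (u t) := fun r hr => by
      obtain ⟨⟨hrO, -, hrt⟩, -⟩ := (hmemR r).1 hr
      exact mem_erase.2 ⟨hrt, hrO⟩
    have := sum_le_sum_of_subset_of_nonneg hRsub fun v _ _ => hc v
    have := add_sum_erase OPT c htO
    linarith
  have hsum : (b - 2 * q) * ∑ r ∈ R, marginal f r S ≤ q * (f S - f Q) :=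
    mul_sum_le_of_mul_sub_le (fun r _ => marginal_nonneg hmono r S) (fun r _ => hc r) hG hcR
      fun r hr => by
        obtain ⟨⟨hrO, hrQ, -⟩, hrS⟩ := (hmemR r).1 hr
        exact hA.marginal_last_mul_le_of_notMem hu hc hmono hsub hgreedy htfirst hrO hrQ hrS
  rcases le_or_gt (b - 2 * q) 0 with hneg | hpos
  · have hqb : q ≤ b := hA.sum_le hb _
    have hΔ : 0 ≤ f (Q ∪ O') - f Q := sub_nonneg.2 (hmono subset_union_left)
    nlinarith
  · nlinarith [mul_le_mul_of_nonneg_left hcover hpos.le]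

end IsBudgetedRun

end

theorem stmt15_general {V : Type*} [Fintype V] [DecidableEq V]
    (f : Finset V → ℝ) (c : V → ℝ) (b : ℝ)
    (hmono : ∀ S T : Finset V, S ⊆ T → f S ≤ f T)
    (hsub : ∀ S T : Finset V, f (S ∪ T) + f (S ∩ T) ≤ f S + f T)
    (hcpos : ∀ v : V, 0 < c v)
    (hb : 0 < b)
    (u : Fin (Fintype.card V) → V) (hu : Function.Bijective u)
    (A : Fin (Fintype.card V + 1) → Finset V)
    (hA0 : A 0 = ∅)
    (hstep : ∀ i : Fin (Fintype.card V),
      ((∑ v ∈ A i.castSucc, c v) + c (u i) ≤ b →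
        A i.succ = insert (u i) (A i.castSucc)) ∧
      (¬ ((∑ v ∈ A i.castSucc, c v) + c (u i) ≤ b) →
        A i.succ = A i.castSucc))
    (hgreedy : ∀ i j : Fin (Fintype.card V), i ≤ j →
      (f (insert (u i) (A i.castSucc)) - f (A i.castSucc)) * c (u j) ≥
      (f (insert (u j) (A i.castSucc)) - f (A i.castSucc)) * c (u i))
    (OPT : Finset V) (hOPT : ∑ v ∈ OPT, c v ≤ b)
    (t : Fin (Fintype.card V))
    (htO : u t ∈ OPT)
    (htrej : (∑ v ∈ A t.castSucc, c v) + c (u t) > b)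
    (htfirst : ∀ s : Fin (Fintype.card V), s < t → u s ∈ OPT →
      (∑ v ∈ A s.castSucc, c v) + c (u s) ≤ b) :
    (b - ∑ v ∈ A t.castSucc, c v) *
        (f (A (Fin.last (Fintype.card V))) - f (A t.castSucc)) ≥
      (b - 2 * ∑ v ∈ A t.castSucc, c v) *
        (f (A t.castSucc ∪ (OPT \ (A t.castSucc ∪ {u t}))) - f (A t.castSucc)) ∧
    ((∑ v ∈ A t.castSucc, c v) < b →
      f (A (Fin.last (Fintype.card V))) ≥ f (A t.castSucc) +
        (1 - (∑ v ∈ A t.castSucc, c v) / (b - ∑ v ∈ A t.castSucc, c v)) *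
          (f (A t.castSucc ∪ (OPT \ (A t.castSucc ∪ {u t}))) - f (A t.castSucc))) := by
  have hA : IsBudgetedRun c b u A :=
    ⟨hA0, fun i => by split_ifs with hfit; exacts [(hstep i).1 hfit, (hstep i).2 hfit]⟩
  have hbound := hA.first_rejected_bound hu (fun v => (hcpos v).le) hb.le
    (fun S T => hmono S T) hsub hgreedy hOPT htO htrej htfirst
  refine ⟨hbound, fun hqb => ?_⟩
  set q := ∑ v ∈ A t.castSucc, c v
  have hbq : 0 < b - q := sub_pos.2 hqb
  have hcoef : 1 - q / (b - q) = (b - 2 * q) / (b - q) := by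
    field_simp
    ring
  rw [ge_iff_le, hcoef, div_mul_eq_mul_div, ← le_sub_iff_add_le', div_le_iff₀ hbq]
  linarith

/-- Corollary 5.3: with o the first element of OPT rejected by the greedy heuristic,
Q the set constructed at that point, and OPT' := OPT \ (Q ∪ {o}),
(b − c(Q))·(f(S_g) − f(Q)) ≥ (b − 2c(Q))·(f(Q ∪ OPT') − f(Q)); equivalently, when
c(Q) < b, f(S_g) ≥ f(Q) + (1 − c(Q)/(b − c(Q)))·(f(Q ∪ OPT') − f(Q)). -/
theorem stmt15 {V : Type*} [Fintype V] [DecidableEq V]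
    (f : Finset V → ℝ) (c : V → ℝ) (b : ℝ)
    (hf0 : f ∅ = 0)
    (hmono : ∀ S T : Finset V, S ⊆ T → f S ≤ f T)
    (hsub : ∀ S T : Finset V, f (S ∪ T) + f (S ∩ T) ≤ f S + f T)
    (hcpos : ∀ v : V, 0 < c v)
    (hb : 0 < b)
    (hcb : ∀ v : V, c v ≤ b)
    (u : Fin (Fintype.card V) → V) (hu : Function.Bijective u)
    (A : Fin (Fintype.card V + 1) → Finset V)
    (hA0 : A 0 = ∅)
    (hstep : ∀ i : Fin (Fintype.card V),
      ((∑ v ∈ A i.castSucc, c v) + c (u i) ≤ b →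
        A i.succ = insert (u i) (A i.castSucc)) ∧
      (¬ ((∑ v ∈ A i.castSucc, c v) + c (u i) ≤ b) →
        A i.succ = A i.castSucc))
    (hgreedy : ∀ i j : Fin (Fintype.card V), i ≤ j →
      (f (insert (u i) (A i.castSucc)) - f (A i.castSucc)) * c (u j) ≥
      (f (insert (u j) (A i.castSucc)) - f (A i.castSucc)) * c (u i))
    (OPT : Finset V) (hOPT : ∑ v ∈ OPT, c v ≤ b)
    (t : Fin (Fintype.card V))
    (htO : u t ∈ OPT)
    (htrej : (∑ v ∈ A t.castSucc, c v) + c (u t) > b)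
    (htfirst : ∀ s : Fin (Fintype.card V), s < t → u s ∈ OPT →
      (∑ v ∈ A s.castSucc, c v) + c (u s) ≤ b) :
    (b - ∑ v ∈ A t.castSucc, c v) *
        (f (A (Fin.last (Fintype.card V))) - f (A t.castSucc)) ≥
      (b - 2 * ∑ v ∈ A t.castSucc, c v) *
        (f (A t.castSucc ∪ (OPT \ (A t.castSucc ∪ {u t}))) - f (A t.castSucc)) ∧
    ((∑ v ∈ A t.castSucc, c v) < b →
      f (A (Fin.last (Fintype.card V))) ≥ f (A t.castSucc) +
        (1 - (∑ v ∈ A t.castSucc, c v) / (b - ∑ v ∈ A t.castSucc, c v)) *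
          (f (A t.castSucc ∪ (OPT \ (A t.castSucc ∪ {u t}))) - f (A t.castSucc))) :=
  stmt15_general f c b hmono hsub hcpos hb u hu A hA0 hstep hgreedy OPT hOPT t htO htrej htfirst
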